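/- For every n ≥ 2, in the poset F_{n+2} the sets C₀ = {a_{n+1}, b_n} and C₁ = {a_n, b_{n+1}} are incomparable chains, and the subposet of F_{n+2} on the complement of C₀ ∪ C₁ (i.e., on {a_0, …, a_{n−1}, b_0, …, b_{n−1}}) coincides with F_n; in particular this subposet is realized by n linear extensions but not by n − 1 linear extensions. -/
import Mathlib


/-- `r` is a linear extension of `le`: a linear order on `P` extending `le`. -/
def IsLinExt {P : Type*} (le r : P → P → Prop) : Prop :=
  IsLinearOrder P r ∧ ∀ x y, le x y → r x y

/-- The family `L` of linear extensions of `le` realizes `le`. -/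
def RealizedBy {P ι : Type*} (le : P → P → Prop) (L : ι → P → P → Prop) : Prop :=
  (∀ i, IsLinExt le (L i)) ∧ ∀ x y, le x y ↔ ∀ i, L i x y

/-- The strict order of the standard example `F n`: `a i ≺ b j` iff `i ≠ j`,
where `a i = Sum.inl i` and `b j = Sum.inr j`. -/
def FnLt (n : ℕ) (u v : Fin n ⊕ Fin n) : Prop :=
  ∃ i j : Fin n, i ≠ j ∧ u = Sum.inl i ∧ v = Sum.inr j

/-- The partial order of the standard example `F n`. -/
def FnLe (n : ℕ) (u v : Fin n ⊕ Fin n) : Prop :=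
  u = v ∨ FnLt n u v

/-- The chain `C₀ = {a_{n+1}, b_n}` inside `F (n+2)`. -/
def chainC0 (n : ℕ) : Set (Fin (n + 2) ⊕ Fin (n + 2)) :=
  {Sum.inl ⟨n + 1, by omega⟩, Sum.inr ⟨n, by omega⟩}

/-- The chain `C₁ = {a_n, b_{n+1}}` inside `F (n+2)`. -/
def chainC1 (n : ℕ) : Set (Fin (n + 2) ⊕ Fin (n + 2)) :=
  {Sum.inl ⟨n, by omega⟩, Sum.inr ⟨n + 1, by omega⟩}

/-- The natural embedding of `F n` into `F (n+2)`. -/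
def FnEmb (n : ℕ) : (Fin n ⊕ Fin n) → (Fin (n + 2) ⊕ Fin (n + 2)) :=
  Sum.map (Fin.castLE (by omega)) (Fin.castLE (by omega))

/- ### auxiliary machinery -/

lemma FnLe_inl_inl (n : ℕ) (i i' : Fin n) : FnLe n (.inl i) (.inl i') ↔ i = i' := by
  simp [FnLe, FnLt]

lemma FnLe_inr_inr (n : ℕ) (i i' : Fin n) : FnLe n (.inr i) (.inr i') ↔ i = i' := by
  simp [FnLe, FnLt]

lemma FnLe_inr_inl (n : ℕ) (i i' : Fin n) : ¬ FnLe n (.inr i) (.inl i') := by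
  simp [FnLe, FnLt]

lemma FnLe_inl_inr (n : ℕ) (i j : Fin n) : FnLe n (.inl i) (.inr j) ↔ i ≠ j := by
  simp [FnLe, FnLt]

def fnFun (n : ℕ) (k : Fin n) : Fin n ⊕ Fin n → ℕ
  | Sum.inl i => if i = k then n + 1 else i.val
  | Sum.inr j => if j = k then n else n + 2 + j.val

lemma fnFun_inj (n : ℕ) (k : Fin n) : Function.Injective (fnFun n k) := by
  intro u v h
  rcases u with i | i <;> rcases v with i' | i' <;>
    simp only [fnFun] at h <;> split_ifs at h with h1 h2 <;>
    simp_all [Fin.ext_iff] <;> omega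

lemma isLinearOrder_of_inj {β : Type*} (f : β → ℕ) (hf : Function.Injective f) :
    IsLinearOrder β (fun x y => f x ≤ f y) := by
  refine { refl := ?_, trans := ?_, antisymm := ?_, total := ?_ }
  · intro x; exact le_refl _
  · intro x y z h1 h2; exact le_trans h1 h2
  · intro x y h1 h2; exact hf (le_antisymm h1 h2)
  · intro x y; exact le_total _ _

lemma fn_realize (n : ℕ) (hn : 2 ≤ n) (u v : Fin n ⊕ Fin n) :
    FnLe n u v ↔ ∀ k, fnFun n k u ≤ fnFun n k v := by
  constructor
  · rintro (rfl | ⟨i, j, hij, rfl, rfl⟩) k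
    · exact le_refl _
    · have hi := i.isLt; have hj := j.isLt
      have hij' : (i : ℕ) ≠ j := fun h => hij (Fin.ext h)
      simp only [fnFun]
      split_ifs with h1 h2 h2 <;> simp_all [Fin.ext_iff] <;> omega
  · intro h
    rcases u with i | i <;> rcases v with i' | i'
    · by_cases hii : i = i'
      · exact Or.inl (by rw [hii])
      · have h' := h i
        simp only [fnFun] at h'
        rw [if_pos trivial, if_neg (show ¬ i' = i from fun hh => hii hh.symm)] at h'
        have := i'.isLt
        omega
    · by_cases hij : i = i'
      · subst hij
        have h' := h i
        simp only [fnFun] at h'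
        rw [if_pos trivial, if_pos trivial] at h'
        omega
      · exact Or.inr ⟨i, i', hij, rfl, rfl⟩
    · have ⟨k, hk⟩ : ∃ k : Fin n, k ≠ i' := by
        rcases Nat.lt_or_ge 0 i'.val with h0 | h0
        · exact ⟨⟨0, by omega⟩, fun hh => by simp [Fin.ext_iff] at hh; omega⟩
        · exact ⟨⟨1, by omega⟩, fun hh => by simp [Fin.ext_iff] at hh; omega⟩
      have h' := h k
      have := i'.isLt
      simp only [fnFun] at h'
      rw [if_neg (show ¬ i' = k from fun hh => hk hh.symm)] at h'
      split_ifs at h' <;> omega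
    · by_cases hii : i = i'
      · exact Or.inl (by rw [hii])
      · have h' := h i'
        simp only [fnFun] at h'
        rw [if_neg hii, if_pos trivial] at h'
        omega


/-- For every `n ≥ 2`: in `F (n+2)` the sets `C₀ = {a_{n+1}, b_n}` and
`C₁ = {a_n, b_{n+1}}` are incomparable chains, the subposet on the complement of
`C₀ ∪ C₁` coincides with `F n` (via the natural embedding), and in particular that
subposet is realized by `n` linear extensions but by no family of `n - 1`. -/
theorem stmt13 (n : ℕ) (hn : 2 ≤ n) :
    IsChain (FnLe (n + 2)) (chainC0 n) ∧ IsChain (FnLe (n + 2)) (chainC1 n) ∧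
    (∀ y ∈ chainC0 n, ∀ z ∈ chainC1 n,
      ¬ FnLe (n + 2) y z ∧ ¬ FnLe (n + 2) z y) ∧
    (∀ x : Fin (n + 2) ⊕ Fin (n + 2),
      x ∉ chainC0 n ∪ chainC1 n ↔ ∃ u : Fin n ⊕ Fin n, FnEmb n u = x) ∧
    (∀ u v : Fin n ⊕ Fin n, FnLe n u v ↔ FnLe (n + 2) (FnEmb n u) (FnEmb n v)) ∧
    (∃ L : Fin n → {x // x ∉ chainC0 n ∪ chainC1 n} →
        {x // x ∉ chainC0 n ∪ chainC1 n} → Prop,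
      RealizedBy (fun x y : {x // x ∉ chainC0 n ∪ chainC1 n} => FnLe (n + 2) x.1 y.1) L) ∧
    (∀ L : Fin (n - 1) → {x // x ∉ chainC0 n ∪ chainC1 n} →
        {x // x ∉ chainC0 n ∪ chainC1 n} → Prop,
      ¬ RealizedBy (fun x y : {x // x ∉ chainC0 n ∪ chainC1 n} => FnLe (n + 2) x.1 y.1) L) := by
  -- parts 1-3, proven first to keep the context clean
  have hC0 : IsChain (FnLe (n + 2)) (chainC0 n) := by
    rintro x hx y hy hne
    simp only [chainC0, Set.mem_insert_iff, Set.mem_singleton_iff] at hx hy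
    rcases hx with rfl | rfl <;> rcases hy with rfl | rfl
    · exact absurd rfl hne
    · exact Or.inl (Or.inr ⟨_, _, by simp [Fin.ext_iff], rfl, rfl⟩)
    · exact Or.inr (Or.inr ⟨_, _, by simp [Fin.ext_iff], rfl, rfl⟩)
    · exact absurd rfl hne
  have hC1 : IsChain (FnLe (n + 2)) (chainC1 n) := by
    rintro x hx y hy hne
    simp only [chainC1, Set.mem_insert_iff, Set.mem_singleton_iff] at hx hy
    rcases hx with rfl | rfl <;> rcases hy with rfl | rfl
    · exact absurd rfl hne
    · exact Or.inl (Or.inr ⟨_, _, by simp [Fin.ext_iff], rfl, rfl⟩)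
    · exact Or.inr (Or.inr ⟨_, _, by simp [Fin.ext_iff], rfl, rfl⟩)
    · exact absurd rfl hne
  have hInc : ∀ y ∈ chainC0 n, ∀ z ∈ chainC1 n,
      ¬ FnLe (n + 2) y z ∧ ¬ FnLe (n + 2) z y := by
    intro y hy z hz
    simp only [chainC0, chainC1, Set.mem_insert_iff, Set.mem_singleton_iff] at hy hz
    rcases hy with rfl | rfl <;> rcases hz with rfl | rfl <;>
      constructor <;>
      · rintro (heq | ⟨i, j, hij, h1, h2⟩) <;>
          simp_all [Fin.ext_iff]
  -- part 4
  have h4 : ∀ x : Fin (n + 2) ⊕ Fin (n + 2),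
      x ∉ chainC0 n ∪ chainC1 n ↔ ∃ u : Fin n ⊕ Fin n, FnEmb n u = x := by
    intro x
    constructor
    · intro hx
      simp only [chainC0, chainC1, Set.mem_union, Set.mem_insert_iff,
        Set.mem_singleton_iff, not_or] at hx
      rcases x with i | i
      · refine ⟨Sum.inl ⟨i.val, ?_⟩, ?_⟩
        · have := i.isLt
          have h1 : (i : ℕ) ≠ n + 1 := fun hh => hx.1.1 (by simp [Fin.ext_iff, hh])
          have h2 : (i : ℕ) ≠ n := fun hh => hx.2.1 (by simp [Fin.ext_iff, hh])
          omega
        · simp [FnEmb, Fin.ext_iff]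
      · refine ⟨Sum.inr ⟨i.val, ?_⟩, ?_⟩
        · have := i.isLt
          have h1 : (i : ℕ) ≠ n := fun hh => hx.1.2 (by simp [Fin.ext_iff, hh])
          have h2 : (i : ℕ) ≠ n + 1 := fun hh => hx.2.2 (by simp [Fin.ext_iff, hh])
          omega
        · simp [FnEmb, Fin.ext_iff]
    · rintro ⟨u, rfl⟩
      rcases u with i | i <;>
      · have := i.isLt
        simp [FnEmb, chainC0, chainC1, Fin.ext_iff]
        omega
  -- part 5 : order embedding
  have h5 : ∀ u v : Fin n ⊕ Fin n, FnLe n u v ↔ FnLe (n + 2) (FnEmb n u) (FnEmb n v) := by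
    intro u v
    rcases u with i | i <;> rcases v with i' | i' <;>
      simp [FnEmb, FnLe_inl_inl, FnLe_inl_inr, FnLe_inr_inl, FnLe_inr_inr, Fin.ext_iff]
  -- the equivalence with F n
  set S := {x // x ∉ chainC0 n ∪ chainC1 n} with hS
  let e : (Fin n ⊕ Fin n) ≃ S :=
    Equiv.ofBijective (fun u => ⟨FnEmb n u, (h4 _).mpr ⟨u, rfl⟩⟩)
      (by
        constructor
        · intro u v huv
          have : FnEmb n u = FnEmb n v := congrArg Subtype.val huv
          exact Sum.map_injective.mpr
            ⟨Fin.castLE_injective _, Fin.castLE_injective _⟩ this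
        · rintro ⟨x, hx⟩
          obtain ⟨u, hu⟩ := (h4 x).mp hx
          exact ⟨u, Subtype.ext hu⟩)
  have ekey : ∀ u v : Fin n ⊕ Fin n, FnLe n u v ↔ FnLe (n + 2) (e u).1 (e v).1 := by
    intro u v; exact h5 u v
  have ekey' : ∀ x y : S, FnLe (n + 2) x.1 y.1 ↔ FnLe n (e.symm x) (e.symm y) := by
    intro x y
    rw [ekey (e.symm x) (e.symm y), Equiv.apply_symm_apply, Equiv.apply_symm_apply]
  refine ⟨hC0, hC1, hInc, h4, h5, ?_, ?_⟩
  · -- realized by n linear extensions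
    refine ⟨fun k x y => fnFun n k (e.symm x) ≤ fnFun n k (e.symm y), ?_, ?_⟩
    · intro k
      constructor
      · exact isLinearOrder_of_inj (fun x => fnFun n k (e.symm x))
          ((fnFun_inj n k).comp e.symm.injective)
      · intro x y hxy
        exact (fn_realize n hn _ _).mp ((ekey' x y).mp hxy) k
    · intro x y
      show FnLe (n + 2) x.1 y.1 ↔ ∀ i : Fin n, fnFun n i (e.symm x) ≤ fnFun n i (e.symm y)
      rw [ekey' x y, fn_realize n hn]
  · -- not realized by n - 1 linear extensions
    rintro L ⟨hlin, hiff⟩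
    have hpair : ∀ i : Fin n, ∃ k, L k (e (Sum.inr i)) (e (Sum.inl i)) := by
      intro i
      have hinc : ¬ FnLe (n + 2) (e (Sum.inl i)).1 (e (Sum.inr i)).1 := by
        rw [← ekey]
        simp [FnLe_inl_inr]
      have hall : ¬ ∀ k, L k (e (Sum.inl i)) (e (Sum.inr i)) :=
        fun hall => hinc ((hiff _ _).mpr hall)
      push_neg at hall
      obtain ⟨k, hk⟩ := hall
      have htot := (hlin k).1.total (e (Sum.inr i)) (e (Sum.inl i))
      rcases htot with h | h
      · exact ⟨k, h⟩
      · exact absurd h hk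
    classical
    obtain ⟨i, i', hne, heq⟩ :=
      Fintype.exists_ne_map_eq_of_card_lt (fun i : Fin n => (hpair i).choose)
        (by simp; omega)
    set k := (hpair i).choose with hk
    have hk1 : L k (e (Sum.inr i)) (e (Sum.inl i)) := (hpair i).choose_spec
    have hk2 : L k (e (Sum.inr i')) (e (Sum.inl i')) := by
      rw [hk, show (hpair i).choose = (hpair i').choose from heq]
      exact (hpair i').choose_spec
    have hle1 : L k (e (Sum.inl i)) (e (Sum.inr i')) :=
      (hlin k).2 _ _ ((ekey _ _).mp (Or.inr ⟨i, i', hne, rfl, rfl⟩))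
    have hle2 : L k (e (Sum.inl i')) (e (Sum.inr i)) :=
      (hlin k).2 _ _ ((ekey _ _).mp (Or.inr ⟨i', i, hne.symm, rfl, rfl⟩))
    have t1 : L k (e (Sum.inl i)) (e (Sum.inl i')) :=
      (hlin k).1.trans _ _ _ hle1 hk2
    have t2 : L k (e (Sum.inl i')) (e (Sum.inl i)) :=
      (hlin k).1.trans _ _ _ hle2 hk1
    have : e (Sum.inl i) = e (Sum.inl i') := (hlin k).1.antisymm _ _ t1 t2
    exact hne (Sum.inl_injective (e.injective this))
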